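/- arXiv:2202.02384 — 3 statements merged into one kernel-verified Lean document; each statement's English description precedes it below -/
import Mathlib

section
/- For any integers a, a' > 1, if L_a ∩ L_{a'} ≠ ∅ then a ∈ L_{a'} or a' ∈ L_a. Consequently, exactly one of the following holds: L_a ∩ L_{a'} = ∅, or L_a ⊆ L_{a'}, or L_{a'} ⊆ L_a. -/
noncomputable section

/-- `P n` is the largest prime factor of `n`. -/
def P (n : ℕ) : ℕ := n.primeFactors.sup id

/-- `Lset a` is the set of L-multiples of `a`. -/
def Lset (a : ℕ) : Set ℕ :=
  {m | ∃ b : ℕ, 0 < b ∧ m = b * a ∧ ∀ p : ℕ, p.Prime → p ∣ b → P a ≤ p}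

/-- `dL a` is the natural density of `Lset a`. -/
def dL (a : ℕ) : ℝ :=
  (1 / (a : ℝ)) * ∏ p ∈ (Finset.range (P a)).filter Nat.Prime, (1 - 1 / (p : ℝ))

/-- `f A = ∑_{a ∈ A} 1/(a log a)`. -/
def f (A : Set ℕ) : ℝ := ∑' a : A, 1 / (((a : ℕ) : ℝ) * Real.log ((a : ℕ) : ℝ))

/-- A set is primitive if no member divides another. -/
def Primitive (A : Set ℕ) : Prop := ∀ a ∈ A, ∀ b ∈ A, a ≠ b → ¬ a ∣ b

/-- A set is L-primitive if no member is an L-multiple of another. -/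
def LPrimitive (A : Set ℕ) : Prop := ∀ a ∈ A, ∀ a' ∈ A, a ≠ a' → a' ∉ Lset a

/-- `μ x = e^γ log x ∏_{p < x} (1 - 1/p)`. -/
def μ (x : ℝ) : ℝ :=
  Real.exp Real.eulerMascheroniConstant * Real.log x *
    ∏ p ∈ (Finset.range ⌈x⌉₊).filter Nat.Prime, (1 - 1 / (p : ℝ))

/-- `m q = inf_{p ≥ q prime} μ p`. -/
def m (q : ℕ) : ℝ := sInf {y | ∃ p : ℕ, p.Prime ∧ q ≤ p ∧ y = μ p}

/-- `M x = sup_{y ≥ x} μ y`. -/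
def M (x : ℝ) : ℝ := sSup {y | ∃ z : ℝ, x ≤ z ∧ y = μ z}


/-! An element `x` of `L_a` is exactly a nonzero multiple of `a` whose `p`-adic valuations agree
with those of `a` at every prime `p < P(a)`. A common element `x` of `L_a` and `L_{a'}` with
`P(a) ≤ P(a')` therefore forces `a` and `a'` to agree below `P(a)`, and `v_p(a) ≤ v_p(x) = v_p(a')`
below `P(a')`; so `a ∣ a'` (hence `a' ∈ L_a`) unless `P(a')` divides `a` more often than `a'`,
which forces `P(a) = P(a')` and the symmetric conclusion. -/

lemma P_le_P_of_dvd {a b : ℕ} (h : a ∣ b) (hb : b ≠ 0) : P a ≤ P b :=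
  Finset.sup_mono (Nat.primeFactors_mono h hb)

lemma le_P_of_factorization_ne_zero {n p : ℕ} (h : n.factorization p ≠ 0) : p ≤ P n := by
  have hp : p ∈ n.primeFactors := by
    rw [← Nat.support_factorization]
    exact Finsupp.mem_support_iff.mpr h
  exact Finset.le_sup (f := id) hp

lemma mem_Lset_iff {a x : ℕ} (ha : a ≠ 0) :
    x ∈ Lset a ↔ x ≠ 0 ∧ a ∣ x ∧ ∀ p < P a, x.factorization p = a.factorization p := by
  constructor
  · rintro ⟨b, hb, rfl, hbP⟩
    refine ⟨by positivity, dvd_mul_left a b, fun p hp => ?_⟩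
    have hbp : b.factorization p = 0 := by
      rw [Nat.factorization_eq_zero_iff]
      by_cases hpp : p.Prime
      · exact Or.inr (Or.inl fun hpb => hp.not_ge (hbP p hpp hpb))
      · exact Or.inl hpp
    rw [Nat.factorization_mul hb.ne' ha, Finsupp.add_apply, hbp, zero_add]
  · rintro ⟨hx, ⟨b, rfl⟩, hagree⟩
    have hb : b ≠ 0 := right_ne_zero_of_mul hx
    refine ⟨b, Nat.pos_of_ne_zero hb, mul_comm a b, fun p hp hpb => ?_⟩
    by_contra hlt
    have hvb : b.factorization p = 0 := by
      have := hagree p (not_le.mp hlt)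
      rw [Nat.factorization_mul ha hb, Finsupp.add_apply] at this
      omega
    exact (hp.factorization_pos_of_dvd hb hpb).ne' hvb

lemma Lset_subset_Lset_of_mem {a a' : ℕ} (ha : a ≠ 0) (h : a' ∈ Lset a) : Lset a' ⊆ Lset a := by
  obtain ⟨ha', hdvd, hagree⟩ := (mem_Lset_iff ha).mp h
  intro x hx
  obtain ⟨hx, hdvd', hagree'⟩ := (mem_Lset_iff ha').mp hx
  refine (mem_Lset_iff ha).mpr ⟨hx, hdvd.trans hdvd', fun p hp => ?_⟩
  rw [hagree' p (hp.trans_le (P_le_P_of_dvd hdvd ha')), hagree p hp]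

lemma mem_Lset_of_mem_inter {a a' x : ℕ} (ha : a ≠ 0) (ha' : a' ≠ 0)
    (hx : x ∈ Lset a ∩ Lset a') (hP : P a ≤ P a')
    (htop : a.factorization (P a') ≤ a'.factorization (P a')) : a' ∈ Lset a := by
  obtain ⟨hx0, hdvd, hagree⟩ := (mem_Lset_iff ha).mp hx.1
  obtain ⟨-, -, hagree'⟩ := (mem_Lset_iff ha').mp hx.2
  have hle : a.factorization ≤ a'.factorization := by
    intro p
    rcases lt_trichotomy p (P a') with hp | rfl | hp
    · rw [← hagree' p hp]
      exact (Nat.factorization_le_iff_dvd ha hx0).mpr hdvd p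
    · exact htop
    · have : a.factorization p = 0 := by
        by_contra h
        exact (le_P_of_factorization_ne_zero h).not_gt (hP.trans_lt hp)
      simp [this]
  refine (mem_Lset_iff ha).mpr ⟨ha', (Nat.factorization_le_iff_dvd ha ha').mp hle, fun p hp => ?_⟩
  rw [← hagree' p (hp.trans_le hP), hagree p hp]

lemma mem_Lset_or_mem_Lset_of_inter_nonempty {a a' : ℕ} (ha : a ≠ 0) (ha' : a' ≠ 0)
    (h : (Lset a ∩ Lset a').Nonempty) : a ∈ Lset a' ∨ a' ∈ Lset a := by
  wlog hP : P a ≤ P a' generalizing a a'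
  · exact (this ha' ha (Set.inter_comm _ _ ▸ h) (le_of_not_ge hP)).symm
  obtain ⟨x, hx⟩ := h
  by_cases htop : a.factorization (P a') ≤ a'.factorization (P a')
  · exact Or.inr (mem_Lset_of_mem_inter ha ha' hx hP htop)
  · have hPeq : P a = P a' := le_antisymm hP (le_P_of_factorization_ne_zero (by omega))
    refine Or.inl (mem_Lset_of_mem_inter ha' ha hx.symm hPeq.ge ?_)
    rw [hPeq]
    omega

/-- Lemma 2.1 (trichotomy): for integers `a, a' > 1`, if `L_a ∩ L_{a'} ≠ ∅` then
`a ∈ L_{a'}` or `a' ∈ L_a`; consequently `L_a ∩ L_{a'} = ∅`, or `L_a ⊆ L_{a'}`,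
or `L_{a'} ⊆ L_a`. -/
theorem Lset_trichotomy (a a' : ℕ) (ha : 1 < a) (ha' : 1 < a') :
    ((Lset a ∩ Lset a').Nonempty → a ∈ Lset a' ∨ a' ∈ Lset a) ∧
    (Lset a ∩ Lset a' = ∅ ∨ Lset a ⊆ Lset a' ∨ Lset a' ⊆ Lset a) := by
  have ha0 : a ≠ 0 := by omega
  have ha'0 : a' ≠ 0 := by omega
  have key := mem_Lset_or_mem_Lset_of_inter_nonempty ha0 ha'0
  refine ⟨key, ?_⟩
  rcases (Lset a ∩ Lset a').eq_empty_or_nonempty with hempty | hne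
  · exact Or.inl hempty
  · rcases key hne with h | h
    · exact Or.inr (Or.inl (Lset_subset_Lset_of_mem ha'0 h))
    · exact Or.inr (Or.inr (Lset_subset_Lset_of_mem ha0 h))
end
end

section
/- If A ⊆ ℤ_{>1} is an L-primitive set, then for any two distinct elements a, a' ∈ A the sets L_a and L_{a'} are disjoint. -/
noncomputable section

/-
For `m ∈ L_a` with `m = b * a`, every prime below `P a` has the same exponent in `m` as in `a`,
and `a` has no prime above `P a`; so `a` is recovered from `m`, `P a` and the exponent of `P a`
in `a`. Comparing two such `a, a'` lexicographically by `(P a, v_{P a}(a))` shows that one divides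
the other, and a divisor chain `a ∣ a' ∣ m` with `m ∈ L_a` forces `a' ∈ L_a`.
-/

lemma P_zero : P 0 = 0 := by simp [P]

lemma le_P_of_prime_dvd {n p : ℕ} (hp : p.Prime) (hpn : p ∣ n) (hn : n ≠ 0) : p ≤ P n :=
  Finset.le_sup (f := id) (Nat.mem_primeFactors.mpr ⟨hp, hpn, hn⟩)

lemma factorization_eq_zero_of_P_lt {n p : ℕ} (hp : P n < p) : n.factorization p = 0 := by
  by_contra h
  rw [Nat.factorization_eq_zero_iff] at h
  push Not at h
  exact (le_P_of_prime_dvd h.1 h.2.1 h.2.2).not_gt hp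

lemma dvd_of_mem_Lset {a m : ℕ} (hm : m ∈ Lset a) : a ∣ m := by
  obtain ⟨b, -, rfl, -⟩ := hm
  exact dvd_mul_left a b

lemma factorization_le_of_mem_Lset {a m : ℕ} (hm : m ∈ Lset a) :
    a.factorization ≤ m.factorization := by
  obtain ⟨b, hb, rfl, -⟩ := hm
  rcases eq_or_ne a 0 with rfl | ha
  · simp
  · rw [Nat.factorization_mul hb.ne' ha]
    exact le_add_self

lemma factorization_eq_of_mem_Lset_of_lt_P {a m p : ℕ} (hm : m ∈ Lset a) (hp : p < P a) :
    m.factorization p = a.factorization p := by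
  obtain ⟨b, hb, rfl, hbP⟩ := hm
  have ha : a ≠ 0 := by rintro rfl; simp [P_zero] at hp
  have hbp : b.factorization p = 0 := by
    by_cases hprime : p.Prime
    · exact Nat.factorization_eq_zero_of_not_dvd fun hpb => (hbP p hprime hpb).not_gt hp
    · exact Nat.factorization_eq_zero_of_not_prime b hprime
  rw [Nat.factorization_mul hb.ne' ha, Finsupp.add_apply, hbp, zero_add]

lemma P_le_of_factorization_lt_of_mem_Lset {a m p : ℕ} (hm : m ∈ Lset a)
    (hlt : a.factorization p < m.factorization p) : P a ≤ p := by
  obtain ⟨b, hb, rfl, hbP⟩ := hm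
  have ha : a ≠ 0 := by rintro rfl; simp at hlt
  rw [Nat.factorization_mul hb.ne' ha, Finsupp.add_apply] at hlt
  have hbp : b.factorization p ≠ 0 := by omega
  have hp : p.Prime := Nat.prime_of_mem_primeFactors
    (Nat.support_factorization b ▸ Finsupp.mem_support_iff.mpr hbp)
  exact hbP p hp (Nat.dvd_of_factorization_pos hbp)

lemma dvd_of_mem_Lset_of_P_le {a a' m : ℕ} (ha : a ≠ 0) (ha' : a' ≠ 0) (hm : m ∈ Lset a)
    (hm' : m ∈ Lset a') (hP : P a ≤ P a')
    (hv : a.factorization (P a) ≤ a'.factorization (P a)) : a ∣ a' := by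
  refine (Nat.factorization_le_iff_dvd ha ha').mp (Finsupp.le_def.mpr fun p => ?_)
  rcases lt_trichotomy p (P a) with hlt | rfl | hgt
  · rw [← factorization_eq_of_mem_Lset_of_lt_P hm hlt,
      factorization_eq_of_mem_Lset_of_lt_P hm' (hlt.trans_le hP)]
  · exact hv
  · simp [factorization_eq_zero_of_P_lt hgt]

lemma dvd_or_dvd_of_mem_Lset_of_mem_Lset {a a' m : ℕ} (ha : a ≠ 0) (ha' : a' ≠ 0)
    (hm : m ∈ Lset a) (hm' : m ∈ Lset a') : a ∣ a' ∨ a' ∣ a := by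
  wlog hP : P a ≤ P a' generalizing a a'
  · exact (this ha' ha hm' hm (le_of_not_ge hP)).symm
  by_cases hv : a.factorization (P a) ≤ a'.factorization (P a)
  · exact Or.inl (dvd_of_mem_Lset_of_P_le ha ha' hm hm' hP hv)
  · have hvm : a.factorization (P a) ≤ m.factorization (P a) := factorization_le_of_mem_Lset hm _
    -- `m` carries more factors `P a` than `a'`, so `P a` divides the cofactor of `a'`
    have hP' : P a' = P a :=
      le_antisymm (P_le_of_factorization_lt_of_mem_Lset hm' (by omega)) hP
    refine Or.inr (dvd_of_mem_Lset_of_P_le ha' ha hm' hm hP'.le ?_)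
    rw [hP']
    exact (not_le.mp hv).le

lemma mem_Lset_of_dvd_of_dvd {a a' m : ℕ} (ha : a ≠ 0) (hm : m ∈ Lset a) (haa' : a ∣ a')
    (ha'm : a' ∣ m) : a' ∈ Lset a := by
  obtain ⟨b, hb, rfl, hbP⟩ := hm
  obtain ⟨c, rfl⟩ := haa'
  have hcb : c ∣ b := by
    rwa [mul_comm b, Nat.mul_dvd_mul_iff_left (Nat.pos_of_ne_zero ha)] at ha'm
  exact ⟨c, Nat.pos_of_dvd_of_pos hcb hb, mul_comm a c, fun p hp hpc => hbP p hp (hpc.trans hcb)⟩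

lemma mem_Lset_or_mem_Lset_of_mem_Lset_of_mem_Lset {a a' m : ℕ} (ha : a ≠ 0) (ha' : a' ≠ 0)
    (hm : m ∈ Lset a) (hm' : m ∈ Lset a') : a' ∈ Lset a ∨ a ∈ Lset a' :=
  (dvd_or_dvd_of_mem_Lset_of_mem_Lset ha ha' hm hm').imp
    (fun h => mem_Lset_of_dvd_of_dvd ha hm h (dvd_of_mem_Lset hm'))
    (fun h => mem_Lset_of_dvd_of_dvd ha' hm' h (dvd_of_mem_Lset hm))

/-- Corollary 2.2: if `A` is an L-primitive set, then `L_a` and `L_{a'}` are disjoint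
for distinct `a, a' ∈ A`. -/
theorem Lset_disjoint_of_LPrimitive (A : Set ℕ) (hA1 : ∀ a ∈ A, 1 < a)
    (hA : LPrimitive A) (a a' : ℕ) (ha : a ∈ A) (ha' : a' ∈ A) (hne : a ≠ a') :
    Disjoint (Lset a) (Lset a') := by
  have ha0 : a ≠ 0 := (zero_lt_one.trans (hA1 a ha)).ne'
  have ha'0 : a' ≠ 0 := (zero_lt_one.trans (hA1 a' ha')).ne'
  refine Set.disjoint_left.mpr fun m hm hm' => ?_
  rcases mem_Lset_or_mem_Lset_of_mem_Lset_of_mem_Lset ha0 ha'0 hm hm' with h | h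
  · exact hA a ha a' ha' hne h
  · exact hA a' ha' a ha hne.symm h
end
end

section
/- Let A be a primitive set of composite numbers and let v ∈ (0,1). Suppose P(a)^{1+v} > a for all a ∈ A. Then the sets L_{a·c}, ranging over pairs (a,c) with a ∈ A and c ∈ C_a^v, are pairwise disjoint: for distinct pairs (a,c) ≠ (a',c') with a,a' ∈ A, c ∈ C_a^v, c' ∈ C_{a'}^v, one has L_{ac} ∩ L_{a'c'} = ∅. -/
/-!
Write `q = P a`, `a* = a / q` and `p = P a*`. From `a < q ^ (1 + v)` we get `p ≤ a* < q ^ v`,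
so every prime factor of `c ∈ C_a^v` lies in `[p, p ^ (1/√v))`, below `q`. Hence every
`n ∈ L_{ac}` splits as `n = R * (a* c)` with `q ∣ R`, all prime factors of `R` at least `q`
and all prime factors of `a* c` below `q`.

If `q = q'`, the parts below `q` agree: `a* c = a'* c'`. The prime factors of `a*` are at most
`p` and those of `c` at least `p`, and likewise for `a'`, so `a*` and `a'*` are comparable under divisibility;
then so are `a = q a*` and `a' = q a'*`, and primitivity gives `a = a'`, `c = c'`.

If `q < q'`, then `q ∣ a'* c'`. If `q ∣ a'*`, also `a* ∣ a'*`, so `a ∣ a'`, against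
primitivity. If `q ∣ c'`, then `q < p' ^ (1/√v)`, and `p' = P a'*` divides `a* c`, so
`p' < p ^ (1/√v)`; together `q < p ^ (1/v)`, against `p < q ^ v`.
-/

noncomputable section

/-- `Cset a v` is the set of positive integers all of whose prime factors lie in the
interval `[P(a*), P(a*)^{1/√v})`, where `a* = a / P(a)`. -/
def Cset (a : ℕ) (v : ℝ) : Set ℕ :=
  {c | 0 < c ∧ ∀ p : ℕ, p.Prime → p ∣ c →
    P (a / P a) ≤ p ∧ (p : ℝ) < (P (a / P a) : ℝ) ^ (1 / Real.sqrt v)}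

lemma P_mem_primeFactors {n : ℕ} (hn : 1 < n) : P n ∈ n.primeFactors := by
  obtain ⟨r, hr, hsup⟩ := Finset.exists_mem_eq_sup _ (Nat.nonempty_primeFactors.mpr hn) id
  rw [P, hsup]
  exact hr

lemma P_prime {n : ℕ} (hn : 1 < n) : (P n).Prime :=
  Nat.prime_of_mem_primeFactors (P_mem_primeFactors hn)

lemma P_dvd {n : ℕ} (hn : 1 < n) : P n ∣ n :=
  Nat.dvd_of_mem_primeFactors (P_mem_primeFactors hn)

lemma le_P {n r : ℕ} (hn : n ≠ 0) (hr : r.Prime) (hrn : r ∣ n) : r ≤ P n :=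
  Finset.le_sup (f := id) (Nat.mem_primeFactors.mpr ⟨hr, hrn, hn⟩)

lemma P_mono {m n : ℕ} (hmn : m ∣ n) (hn : n ≠ 0) : P m ≤ P n :=
  Finset.sup_mono (Nat.primeFactors_mono hmn hn)

lemma Primitive.eq_of_dvd {A : Set ℕ} (hA : Primitive A) {a b : ℕ} (ha : a ∈ A)
    (hb : b ∈ A) (hab : a ∣ b) : a = b :=
  by_contra fun hne => hA a ha b hb hne hab

lemma coprime_of_forall_prime_dvd_lt_le {m k t : ℕ}
    (hm : ∀ r, r.Prime → r ∣ m → r < t) (hk : ∀ r, r.Prime → r ∣ k → t ≤ r) : m.Coprime k :=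
  Nat.coprime_of_dvd fun r hr hrm hrk => (hm r hr hrm).not_ge (hk r hr hrk)

lemma eq_of_mul_eq_mul_of_forall_prime_dvd {R m R' m' t : ℕ} (h : R * m = R' * m')
    (hR : ∀ r, r.Prime → r ∣ R → t ≤ r) (hR' : ∀ r, r.Prime → r ∣ R' → t ≤ r)
    (hm : ∀ r, r.Prime → r ∣ m → r < t) (hm' : ∀ r, r.Prime → r ∣ m' → r < t) : m = m' :=
  Nat.dvd_antisymm
    ((coprime_of_forall_prime_dvd_lt_le hm hR').dvd_of_dvd_mul_left (h ▸ dvd_mul_left m R))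
    ((coprime_of_forall_prime_dvd_lt_le hm' hR).dvd_of_dvd_mul_left (h ▸ dvd_mul_left m' R'))

lemma factorization_eq_zero_of_not_prime_dvd {n r : ℕ} (h : r.Prime → r ∣ n → False) :
    n.factorization r = 0 :=
  (Nat.factorization_eq_zero_iff n r).mpr <| by tauto

lemma factorization_add_eq_of_mul_eq_mul {s c s' c' : ℕ} (hs : s ≠ 0) (hc : c ≠ 0)
    (hs' : s' ≠ 0) (hc' : c' ≠ 0) (h : s * c = s' * c') (r : ℕ) :
    s.factorization r + c.factorization r = s'.factorization r + c'.factorization r := by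
  simpa only [Nat.factorization_mul hs hc, Nat.factorization_mul hs' hc', Finsupp.add_apply]
    using congrArg (fun n => n.factorization r) h

lemma dvd_of_mul_eq_mul_of_factorization_le {s c s' c' t t' : ℕ} (hs0 : s ≠ 0) (hc0 : c ≠ 0)
    (hs'0 : s' ≠ 0) (hc'0 : c' ≠ 0) (h : s * c = s' * c')
    (hs : ∀ r, r.Prime → r ∣ s → r ≤ t) (hc : ∀ r, r.Prime → r ∣ c → t ≤ r)
    (hc' : ∀ r, r.Prime → r ∣ c' → t' ≤ r) (htt' : t ≤ t')
    (hst : s.factorization t ≤ s'.factorization t) : s ∣ s' := by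
  rw [← Nat.factorization_le_iff_dvd hs0 hs'0]
  intro r
  have hsum := factorization_add_eq_of_mul_eq_mul hs0 hc0 hs'0 hc'0 h r
  rcases lt_trichotomy r t with hrt | rfl | htr
  · have hcr : c.factorization r = 0 :=
      factorization_eq_zero_of_not_prime_dvd fun hr hrc => (hc r hr hrc).not_gt hrt
    have hc'r : c'.factorization r = 0 :=
      factorization_eq_zero_of_not_prime_dvd fun hr hrc =>
        (hc' r hr hrc).not_gt (hrt.trans_le htt')
    show s.factorization r ≤ s'.factorization r
    omega
  · exact hst
  · have hsr : s.factorization r = 0 :=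
      factorization_eq_zero_of_not_prime_dvd fun hr hrs => (hs r hr hrs).not_gt htr
    show s.factorization r ≤ s'.factorization r
    omega

/-- Below `min t t'`, both `s` and `s'` agree with `s * c`; their exponents at `min t t'`
decide which one divides the other. -/
lemma dvd_or_dvd_of_mul_eq_mul {s c s' c' t t' : ℕ} (hs0 : s ≠ 0) (hc0 : c ≠ 0)
    (hs'0 : s' ≠ 0) (hc'0 : c' ≠ 0) (h : s * c = s' * c')
    (hs : ∀ r, r.Prime → r ∣ s → r ≤ t) (hc : ∀ r, r.Prime → r ∣ c → t ≤ r)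
    (hs' : ∀ r, r.Prime → r ∣ s' → r ≤ t') (hc' : ∀ r, r.Prime → r ∣ c' → t' ≤ r) :
    s ∣ s' ∨ s' ∣ s := by
  wlog htt' : t ≤ t' generalizing s c s' c' t t'
  · exact (this hs'0 hc'0 hs0 hc0 h.symm hs' hc' hs hc (le_of_not_ge htt')).symm
  rcases le_total (s.factorization t) (s'.factorization t) with hst | hst
  · exact .inl (dvd_of_mul_eq_mul_of_factorization_le hs0 hc0 hs'0 hc'0 h hs hc hc' htt' hst)
  rcases htt'.eq_or_lt with rfl | htt'
  · exact .inr (dvd_of_mul_eq_mul_of_factorization_le hs'0 hc'0 hs0 hc0 h.symm hs' hc' hc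
      le_rfl hst)
  · have hc't : c'.factorization t = 0 :=
      factorization_eq_zero_of_not_prime_dvd fun hr hrc => (hc' t hr hrc).not_gt htt'
    have hsum := factorization_add_eq_of_mul_eq_mul hs0 hc0 hs'0 hc'0 h t
    have hst' : s'.factorization t = s.factorization t := by omega
    exact .inl (dvd_of_mul_eq_mul_of_factorization_le hs0 hc0 hs'0 hc'0 h hs hc hc' htt'.le
      hst'.ge)

/-- The reason for the exponent `1 / √v` in `Cset`: two such steps compose to `1 / v`. -/
lemma rpow_lt_of_rpow_sqrt_lt {v x y z : ℝ} (hv : 0 < v) (hx : 0 ≤ x)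
    (hxy : x ^ √v < y) (hyz : y ^ √v < z) : x ^ v < z :=
  calc x ^ v = (x ^ √v) ^ √v := by rw [← Real.rpow_mul hx, Real.mul_self_sqrt hv.le]
    _ < y ^ √v := Real.rpow_lt_rpow (by positivity) hxy (Real.sqrt_pos.2 hv)
    _ < z := hyz

lemma mul_cofactor {a : ℕ} (ha : 1 < a) : P a * (a / P a) = a :=
  Nat.mul_div_cancel' (P_dvd ha)

lemma cofactor_pos {a : ℕ} (ha : 1 < a) : 0 < a / P a :=
  Nat.div_pos (Nat.le_of_dvd (by omega) (P_dvd ha)) (P_prime ha).pos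

lemma exists_eq_mul_cofactor_mul_of_mem_Lset {a c n : ℕ} (ha : 1 < a) (hc : c ≠ 0)
    (hn : n ∈ Lset (a * c)) :
    ∃ R, n = R * (a / P a * c) ∧ P a ∣ R ∧ ∀ r, r.Prime → r ∣ R → P a ≤ r := by
  obtain ⟨b, -, rfl, hb⟩ := hn
  have hPa : P a ≤ P (a * c) := P_mono (dvd_mul_right a c) (by positivity)
  refine ⟨b * P a, ?_, dvd_mul_left _ _, fun r hr hrR => ?_⟩
  · nth_rw 1 [← mul_cofactor ha]
    ring
  · rcases hr.dvd_mul.1 hrR with hrb | hrP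
    · exact hPa.trans (hb r hr hrb)
    · exact ((Nat.prime_dvd_prime_iff_eq hr (P_prime ha)).1 hrP).ge

lemma rpow_sqrt_lt_of_mem_Cset {a c r : ℕ} {v : ℝ} (hv : 0 < v) (hc : c ∈ Cset a v)
    (hr : r.Prime) (hrc : r ∣ c) : P (a / P a) ≤ r ∧ (r : ℝ) ^ √v < P (a / P a) := by
  obtain ⟨hle, hlt⟩ := hc.2 r hr hrc
  rw [one_div, Real.lt_rpow_inv_iff_of_pos (by positivity) (by positivity)
    (Real.sqrt_pos.2 hv)] at hlt
  exact ⟨hle, hlt⟩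

structure IsAdmissible (v : ℝ) (a : ℕ) : Prop where
  one_lt : 1 < a
  not_prime : ¬ a.Prime
  lt_rpow : (a : ℝ) < (P a : ℝ) ^ (1 + v)

namespace IsAdmissible

variable {v : ℝ} {a a' c c' n : ℕ}

lemma P_prime (ha : IsAdmissible v a) : (P a).Prime :=
  _root_.P_prime ha.one_lt

lemma one_lt_cofactor (ha : IsAdmissible v a) : 1 < a / P a := by
  have hpos := cofactor_pos ha.one_lt
  refine lt_of_le_of_ne hpos fun h => ha.not_prime ?_
  rw [← mul_cofactor ha.one_lt, ← h, mul_one]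
  exact ha.P_prime

lemma P_cofactor_lt_rpow (ha : IsAdmissible v a) : (P (a / P a) : ℝ) < (P a : ℝ) ^ v := by
  have hq : (0 : ℝ) < P a := by exact_mod_cast ha.P_prime.pos
  have hs : ((a / P a : ℕ) : ℝ) < (P a : ℝ) ^ v := by
    have h := ha.lt_rpow
    have ha_eq : (a : ℝ) = P a * (a / P a : ℕ) := by
      exact_mod_cast (mul_cofactor ha.one_lt).symm
    rw [ha_eq, Real.rpow_add hq, Real.rpow_one] at h
    exact lt_of_mul_lt_mul_left h hq.le
  refine lt_of_le_of_lt ?_ hs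
  exact_mod_cast Nat.le_of_dvd (cofactor_pos ha.one_lt) (_root_.P_dvd ha.one_lt_cofactor)

lemma rpow_sqrt_lt_P_cofactor (ha : IsAdmissible v a) (hv : v ∈ Set.Ioo 0 1)
    (hc : c ∈ Cset a v) {r : ℕ} (hr : r.Prime) (hrd : r ∣ a / P a * c) :
    (r : ℝ) ^ √v < P (a / P a) := by
  rcases hr.dvd_mul.1 hrd with hrs | hrc
  · calc (r : ℝ) ^ √v < r :=
          Real.rpow_lt_self_of_one_lt (by exact_mod_cast hr.one_lt)
            (by simpa using Real.sqrt_lt_sqrt hv.1.le hv.2)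
      _ ≤ P (a / P a) := by exact_mod_cast le_P (cofactor_pos ha.one_lt).ne' hr hrs
  · exact (rpow_sqrt_lt_of_mem_Cset hv.1 hc hr hrc).2

lemma lt_P_of_prime_dvd_cofactor_mul (ha : IsAdmissible v a) (hv : v ∈ Set.Ioo 0 1)
    (hc : c ∈ Cset a v) {r : ℕ} (hr : r.Prime) (hrd : r ∣ a / P a * c) : r < P a := by
  have hv_le : v ≤ √v := (Real.le_sqrt hv.1.le hv.1.le).2 (by nlinarith [hv.1, hv.2])
  have h : (r : ℝ) ^ √v < (P a : ℝ) ^ √v :=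
    (ha.rpow_sqrt_lt_P_cofactor hv hc hr hrd).trans <| ha.P_cofactor_lt_rpow.trans_le <|
      Real.rpow_le_rpow_of_exponent_le (by exact_mod_cast ha.P_prime.one_le) hv_le
  exact_mod_cast (Real.rpow_lt_rpow_iff (by positivity) (by positivity)
    (Real.sqrt_pos.2 hv.1)).1 h

lemma P_dvd_cofactor_of_P_lt (ha : IsAdmissible v a) (ha' : IsAdmissible v a')
    (hv : v ∈ Set.Ioo 0 1) (hc : c ∈ Cset a v) (hc' : c' ∈ Cset a' v) (hlt : P a < P a')
    (hn : n ∈ Lset (a * c)) (hn' : n ∈ Lset (a' * c')) : P a ∣ a' / P a' := by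
  obtain ⟨R, rfl, hqR, hR⟩ := exists_eq_mul_cofactor_mul_of_mem_Lset ha.one_lt hc.1.ne' hn
  obtain ⟨R', hRR', -, hR'⟩ := exists_eq_mul_cofactor_mul_of_mem_Lset ha'.one_lt hc'.1.ne' hn'
  have hq : P a ∣ a' / P a' * c' :=
    (ha.P_prime.coprime_iff_not_dvd.2 fun h => (hR' _ ha.P_prime h).not_gt hlt
      ).dvd_of_dvd_mul_left (hRR' ▸ dvd_mul_of_dvd_left hqR _)
  by_contra hqs'
  have hqc' : P a ∣ c' := (ha.P_prime.dvd_mul.1 hq).resolve_left hqs'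
  obtain ⟨hp'q, hqp'⟩ := rpow_sqrt_lt_of_mem_Cset hv.1 hc' ha.P_prime hqc'
  have hp' := _root_.P_prime ha'.one_lt_cofactor
  have hp'_dvd_s' := _root_.P_dvd ha'.one_lt_cofactor
  have hp'_lt : P (a' / P a') < P a := hp'q.lt_of_ne fun h => hqs' (h ▸ hp'_dvd_s')
  have hp'_dvd : P (a' / P a') ∣ a / P a * c :=
    (hp'.coprime_iff_not_dvd.2 fun h => (hR _ hp' h).not_gt hp'_lt).dvd_of_dvd_mul_left
      (hRR' ▸ dvd_mul_of_dvd_right (dvd_mul_of_dvd_left hp'_dvd_s' c') R')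
  have hp'p := ha.rpow_sqrt_lt_P_cofactor hv hc hp' hp'_dvd
  exact (rpow_lt_of_rpow_sqrt_lt hv.1 (Nat.cast_nonneg _) hqp' hp'p).not_gt
    ha.P_cofactor_lt_rpow

lemma dvd_of_P_lt (ha : IsAdmissible v a) (ha' : IsAdmissible v a')
    (hv : v ∈ Set.Ioo 0 1) (hc : c ∈ Cset a v) (hc' : c' ∈ Cset a' v) (hlt : P a < P a')
    (hn : n ∈ Lset (a * c)) (hn' : n ∈ Lset (a' * c')) : a ∣ a' := by
  have hqs' := ha.P_dvd_cofactor_of_P_lt ha' hv hc hc' hlt hn hn'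
  obtain ⟨R, rfl, -, -⟩ := exists_eq_mul_cofactor_mul_of_mem_Lset ha.one_lt hc.1.ne' hn
  obtain ⟨R', hRR', -, hR'⟩ := exists_eq_mul_cofactor_mul_of_mem_Lset ha'.one_lt hc'.1.ne' hn'
  have hqp' : P a ≤ P (a' / P a') := le_P (cofactor_pos ha'.one_lt).ne' ha.P_prime hqs'
  have hs_lt : ∀ r, r.Prime → r ∣ a / P a → r < P a := fun r hr hrs =>
    ha.lt_P_of_prime_dvd_cofactor_mul hv hc hr (dvd_mul_of_dvd_left hrs c)
  have hs : a / P a ∣ a' / P a' * c' :=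
    (coprime_of_forall_prime_dvd_lt_le (fun r hr hrs => (hs_lt r hr hrs).trans hlt)
      hR').dvd_of_dvd_mul_left (hRR' ▸ dvd_mul_of_dvd_right (dvd_mul_right _ c) R)
  have hss' : a / P a ∣ a' / P a' :=
    (coprime_of_forall_prime_dvd_lt_le (fun r hr hrs => (hs_lt r hr hrs).trans_le hqp')
      fun r hr hrc => (rpow_sqrt_lt_of_mem_Cset hv.1 hc' hr hrc).1).dvd_of_dvd_mul_right hs
  calc a = P a * (a / P a) := (mul_cofactor ha.one_lt).symm
    _ ∣ a' / P a' := (ha.P_prime.coprime_iff_not_dvd.2 fun h => (hs_lt _ ha.P_prime h).false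
        ).mul_dvd_of_dvd_of_dvd hqs' hss'
    _ ∣ a' := Nat.div_dvd_of_dvd (_root_.P_dvd ha'.one_lt)

lemma cofactor_mul_eq_of_P_eq (ha : IsAdmissible v a) (ha' : IsAdmissible v a')
    (hv : v ∈ Set.Ioo 0 1) (hc : c ∈ Cset a v) (hc' : c' ∈ Cset a' v) (hq : P a = P a')
    (hn : n ∈ Lset (a * c)) (hn' : n ∈ Lset (a' * c')) :
    a / P a * c = a' / P a' * c' := by
  obtain ⟨R, rfl, -, hR⟩ := exists_eq_mul_cofactor_mul_of_mem_Lset ha.one_lt hc.1.ne' hn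
  obtain ⟨R', hRR', -, hR'⟩ := exists_eq_mul_cofactor_mul_of_mem_Lset ha'.one_lt hc'.1.ne' hn'
  exact eq_of_mul_eq_mul_of_forall_prime_dvd hRR' hR (fun r hr hrR => hq ▸ hR' r hr hrR)
    (fun r hr => ha.lt_P_of_prime_dvd_cofactor_mul hv hc hr)
    (fun r hr hrd => hq ▸ ha'.lt_P_of_prime_dvd_cofactor_mul hv hc' hr hrd)

end IsAdmissible

lemma dvd_or_dvd_of_cofactor_mul_eq {v : ℝ} {a a' c c' : ℕ} (ha : 1 < a) (ha' : 1 < a')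
    (hc : c ∈ Cset a v) (hc' : c' ∈ Cset a' v) (hq : P a = P a')
    (h : a / P a * c = a' / P a' * c') : a ∣ a' ∨ a' ∣ a := by
  have hs := (cofactor_pos ha).ne'
  have hs' := (cofactor_pos ha').ne'
  have ha_eq : a = P a * (a / P a) := (mul_cofactor ha).symm
  have ha'_eq : a' = P a * (a' / P a') := by rw [hq, mul_cofactor ha']
  rw [ha_eq, ha'_eq]
  exact (dvd_or_dvd_of_mul_eq_mul hs hc.1.ne' hs' hc'.1.ne' h (fun r => le_P hs)
    (fun r hr hrc => (hc.2 r hr hrc).1) (fun r => le_P hs')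
    fun r hr hrc => (hc'.2 r hr hrc).1).imp (mul_dvd_mul_left _) (mul_dvd_mul_left _)

/-- Lemma 3.1: let `A` be a primitive set of composite numbers and `v ∈ (0,1)` with
`P(a)^{1+v} > a` for all `a ∈ A`. Then the sets `L_{ac}`, ranging over `a ∈ A` and
`c ∈ C_a^v`, are pairwise disjoint. -/
theorem Lset_mul_disjoint (A : Set ℕ) (hA1 : ∀ a ∈ A, 1 < a)
    (hcomp : ∀ a ∈ A, ¬ a.Prime) (hprim : Primitive A)
    (v : ℝ) (hv : v ∈ Set.Ioo (0 : ℝ) 1)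
    (hP : ∀ a ∈ A, (a : ℝ) < (P a : ℝ) ^ (1 + v))
    (a a' : ℕ) (ha : a ∈ A) (ha' : a' ∈ A)
    (c c' : ℕ) (hc : c ∈ Cset a v) (hc' : c' ∈ Cset a' v)
    (hne : (a, c) ≠ (a', c')) :
    Disjoint (Lset (a * c)) (Lset (a' * c')) := by
  have hadm : ∀ x ∈ A, IsAdmissible v x := fun x hx => ⟨hA1 x hx, hcomp x hx, hP x hx⟩
  rw [Set.disjoint_left]
  intro n hn hn'
  rcases lt_trichotomy (P a) (P a') with hlt | heq | hgt
  · have hdvd := (hadm a ha).dvd_of_P_lt (hadm a' ha') hv hc hc' hlt hn hn'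
    exact hlt.ne (congrArg P (hprim.eq_of_dvd ha ha' hdvd))
  · have hsc := (hadm a ha).cofactor_mul_eq_of_P_eq (hadm a' ha') hv hc hc' heq hn hn'
    obtain rfl : a = a' := (dvd_or_dvd_of_cofactor_mul_eq (hA1 a ha) (hA1 a' ha') hc hc' heq
      hsc).elim (hprim.eq_of_dvd ha ha') fun h => (hprim.eq_of_dvd ha' ha h).symm
    exact hne (by rw [Nat.eq_of_mul_eq_mul_left (cofactor_pos (hA1 a ha)) hsc])
  · have hdvd := (hadm a' ha').dvd_of_P_lt (hadm a ha) hv hc' hc hgt hn' hn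
    exact hgt.ne (congrArg P (hprim.eq_of_dvd ha' ha hdvd))
end
end
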